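/- For circular Nim CN(4,2) (four stacks in a circle, each move removes at least one token total from two consecutive stacks), the set of P-positions is exactly {(a,b,a,b) : a,b ≥ 0}. -/

import Mathlib

/-- A legal move in SetNim: at least one stack strictly decreases, all changed
stacks lie in some allowed move set, stacks weakly decrease. -/
def Move {V : Type} (A : Set (Set V)) (p q : V → ℕ) : Prop :=
  q ≠ p ∧ (∀ i, q i ≤ p i) ∧ ∃ a ∈ A, ∀ i, q i ≠ p i → i ∈ a

/-- P-positions: positions all of whose options are N-positions. -/
def PPos {V : Type} [Fintype V] (A : Set (Set V)) (p : V → ℕ) : Prop :=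
  ∀ q, Move A p q → ¬ PPos A q
termination_by Finset.univ.sum p
decreasing_by
  rename_i hq
  obtain ⟨hne, hle, -⟩ := hq
  refine Finset.sum_lt_sum (fun i _ => hle i) ?_
  obtain ⟨i, hi⟩ := Function.ne_iff.mp hne
  exact ⟨i, Finset.mem_univ i, lt_of_le_of_ne (hle i) hi⟩


/-- Move sets of circular Nim CN(4,2): two consecutive stacks. -/
def CN42 : Set (Set (Fin 4)) := {s | ∃ i : Fin 4, s = {i, i + 1}}

/-!
The P-positions are those invariant under the antipodal map `j ↦ j + 2`. No move set of CN(4,2)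
contains an antipodal pair, so a move from an invariant position changes a stack without touching
its mirror image; conversely, from any other position, lowering every stack to the minimum of it
and its mirror image changes at most one stack of each antipodal pair, and such stacks are
consecutive on the circle. This is the mirror strategy, and it works for any involution `σ` of
the stacks such that the move sets are, up to inclusion, exactly the `σ`-free sets.
-/

section SetNim

variable {V : Type} {A : Set (Set V)}

theorem pPos_iff [Fintype V] (p : V → ℕ) : PPos A p ↔ ∀ q, Move A p q → ¬ PPos A q := by
  rw [PPos]

theorem Move.sum_lt [Fintype V] {p q : V → ℕ} (h : Move A p q) : ∑ i, q i < ∑ i, p i := by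
  obtain ⟨hne, hle, -⟩ := h
  obtain ⟨i, hi⟩ := Function.ne_iff.mp hne
  exact Finset.sum_lt_sum (fun j _ => hle j) ⟨i, Finset.mem_univ i, (hle i).lt_of_ne hi⟩

theorem pPos_iff_mem_of_kernel [Fintype V] (S : Set (V → ℕ))
    (hindep : ∀ p ∈ S, ∀ q, Move A p q → q ∉ S) (habsorb : ∀ p ∉ S, ∃ q ∈ S, Move A p q)
    (p : V → ℕ) : PPos A p ↔ p ∈ S := by
  induction hn : ∑ i, p i using Nat.strong_induction_on generalizing p with
  | _ n ih =>
    have ih' : ∀ q, Move A p q → (PPos A q ↔ q ∈ S) :=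
      fun q hq => ih _ (hn ▸ hq.sum_lt) q rfl
    rw [pPos_iff]
    by_cases hp : p ∈ S
    · exact iff_of_true (fun q hq => (ih' q hq).not.mpr (hindep p hp q hq)) hp
    · obtain ⟨q, hqS, hq⟩ := habsorb p hp
      exact iff_of_false (fun h => h q hq ((ih' q hq).mpr hqS)) hp

variable {σ : V → V}

theorem Move.comp_ne_of_comp_eq (hfree : ∀ a ∈ A, ∀ j ∈ a, σ j ∉ a) {p q : V → ℕ}
    (hp : p ∘ σ = p) (h : Move A p q) : q ∘ σ ≠ q := by
  obtain ⟨hne, -, a, ha, hsub⟩ := h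
  obtain ⟨j, hj⟩ := Function.ne_iff.mp hne
  have hσj : q (σ j) = p (σ j) := by
    by_contra hc
    exact hfree a ha j (hsub j hj) (hsub _ hc)
  intro hq
  exact hj <| calc
    q j = q (σ j) := (congrFun hq j).symm
    _ = p (σ j) := hσj
    _ = p j := congrFun hp j

theorem exists_move_comp_eq (hσ : Function.Involutive σ)
    (hcover : ∀ s : Set V, (∀ j ∈ s, σ j ∉ s) → ∃ a ∈ A, s ⊆ a) {p : V → ℕ} (hp : p ∘ σ ≠ p) :
    ∃ q, Move A p q ∧ q ∘ σ = q := by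
  obtain ⟨a, ha, hsub⟩ := hcover {j | p (σ j) < p j} fun j hj hσj => by
    simp only [Set.mem_ofPred_eq, hσ j] at hj hσj
    exact lt_asymm hj hσj
  refine ⟨fun j => min (p j) (p (σ j)), ⟨?_, fun j => min_le_left _ _, a, ha, ?_⟩, ?_⟩
  · obtain ⟨j, hj⟩ := Function.ne_iff.mp hp
    replace hj : p (σ j) ≠ p j := hj
    rcases hj.lt_or_gt with hlt | hlt
    · exact Function.ne_iff.mpr ⟨j, by rw [min_eq_right hlt.le]; exact hlt.ne⟩
    · exact Function.ne_iff.mpr ⟨σ j, by rw [hσ j, min_eq_right hlt.le]; exact hlt.ne⟩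
  · intro j hj
    exact hsub (lt_of_not_ge fun h => hj (min_eq_left h))
  · funext j
    simp only [Function.comp, hσ j, min_comm]

theorem pPos_iff_comp_eq [Fintype V] (hσ : Function.Involutive σ)
    (hfree : ∀ a ∈ A, ∀ j ∈ a, σ j ∉ a)
    (hcover : ∀ s : Set V, (∀ j ∈ s, σ j ∉ s) → ∃ a ∈ A, s ⊆ a) (p : V → ℕ) :
    PPos A p ↔ p ∘ σ = p :=
  pPos_iff_mem_of_kernel {p | p ∘ σ = p}
    (fun _ hp _ hq => hq.comp_ne_of_comp_eq hfree hp)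
    (fun _ hp => (exists_move_comp_eq hσ hcover hp).imp fun _ h => ⟨h.2, h.1⟩) p

end SetNim

theorem cn42_antipodal_free : ∀ a ∈ CN42, ∀ j ∈ a, j + 2 ∉ a := by
  rintro _ ⟨i, rfl⟩ j
  simp only [Set.mem_insert_iff, Set.mem_singleton_iff]
  revert i j
  decide

theorem cn42_covers_antipodal_free (s : Set (Fin 4)) (hs : ∀ j ∈ s, j + 2 ∉ s) :
    ∃ a ∈ CN42, s ⊆ a := by
  classical
  have key : ∀ t : Finset (Fin 4), (∀ j ∈ t, j + 2 ∉ t) → ∃ i, ∀ j ∈ t, j = i ∨ j = i + 1 := by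
    decide
  obtain ⟨i, hi⟩ := key s.toFinset (by simpa using hs)
  exact ⟨{i, i + 1}, ⟨i, rfl⟩, fun j hj => hi j (Set.mem_toFinset.mpr hj)⟩

theorem cn42_ppos (p : Fin 4 → ℕ) :
    PPos CN42 p ↔ ∃ a b : ℕ, p = ![a, b, a, b] := by
  have hσ : Function.Involutive (· + 2 : Fin 4 → Fin 4) := by
    intro j
    fin_cases j <;> rfl
  rw [pPos_iff_comp_eq hσ cn42_antipodal_free cn42_covers_antipodal_free]
  constructor
  · intro h
    have h2 : p 2 = p 0 := congrFun h 0
    have h3 : p 3 = p 1 := congrFun h 1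
    refine ⟨p 0, p 1, funext fun j => ?_⟩
    fin_cases j <;> simp [h2, h3]
  · rintro ⟨a, b, rfl⟩
    funext j
    fin_cases j <;> rfl
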